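/- Ω(0) = 1 − (log 4)/π; equivalently, (1/π) ∫₀¹ (1/(1+√(1−r))) · (1−r)^(−1/2) · ( r^(−1/2) − 1 + r^(1/2) ) dr = 1 − (log 4)/π. -/

import Mathlib

/-!
At `δ = 0` the integrand is nonnegative on `(0, 1)` and has an elementary antiderivative that
extends continuously to `[0, 1]`. A nonnegative derivative is automatically integrable, so the
fundamental theorem of calculus applies to the improper integral, which is `π - log 4`.
-/

open MeasureTheory

/-- The function Ω from the paper: for δ < 1, δ ≠ 1/2,
`Ω(δ) = (1/π) ∫₀¹ (1/(1+√(1−r))) (1−r)^(−1/2) ((1/(1−2δ))(r^(−1/2) − r^(−δ)) + r^(1/2−δ)) dr`. -/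
noncomputable def Omega (δ : ℝ) : ℝ :=
  (1 / Real.pi) *
    ∫ r in Set.Ioo (0:ℝ) 1,
      (1 / (1 + Real.sqrt (1 - r))) * (1 - r) ^ (-(1:ℝ)/2) *
        ((1 / (1 - 2*δ)) * (r ^ (-(1:ℝ)/2) - r ^ (-δ)) + r ^ ((1:ℝ)/2 - δ))

open Real Set

theorem Real.rpow_neg_one_half_eq_inv_sqrt {x : ℝ} (hx : 0 ≤ x) : x ^ (-(1:ℝ)/2) = (√x)⁻¹ := by
  rw [neg_div, rpow_neg hx, sqrt_eq_rpow]

theorem Real.hasDerivAt_sqrt_one_sub {x : ℝ} (hx : x < 1) :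
    HasDerivAt (fun y => √(1 - y)) (-1 / (2 * √(1 - x))) x :=
  ((hasDerivAt_id x).const_sub 1).sqrt (sub_pos.2 hx).ne'

theorem Real.hasDerivAt_arcsin_sqrt {x : ℝ} (hx₀ : 0 < x) (hx₁ : x < 1) :
    HasDerivAt (fun y => arcsin √y) (1 / (2 * √x * √(1 - x))) x := by
  have hs : √x < 1 := (sqrt_lt' one_pos).2 (by simpa using hx₁)
  refine ((hasDerivAt_arcsin (by linarith [sqrt_nonneg x]) hs.ne).comp x
    (hasDerivAt_sqrt hx₀.ne')).congr_deriv ?_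
  rw [sq_sqrt hx₀.le]
  ring

namespace OmegaZero

noncomputable def integrand (r : ℝ) : ℝ :=
  1 / (1 + √(1 - r)) * (√(1 - r))⁻¹ * ((√r)⁻¹ - 1 + √r)

noncomputable def antideriv (r : ℝ) : ℝ :=
  2 * √r / (1 + √(1 - r)) + 2 * log (1 + √(1 - r)) + 2 * arcsin √r - 2 * √r

theorem integrand_nonneg {r : ℝ} (hr : r ∈ Ioo (0:ℝ) 1) : 0 ≤ integrand r := by
  have h : 1 ≤ (√r)⁻¹ := one_le_inv₀ (sqrt_pos.2 hr.1) |>.2 (sqrt_le_one.2 hr.2.le)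
  exact mul_nonneg (by positivity) (by linarith [sqrt_nonneg r])

theorem continuous_antideriv : Continuous antideriv := by
  have hden : ∀ x, 1 + √(1 - x) ≠ 0 := fun x => by positivity
  unfold antideriv
  fun_prop (disch := exact hden _)

theorem hasDerivAt_antideriv {r : ℝ} (hr : r ∈ Ioo (0:ℝ) 1) :
    HasDerivAt antideriv (integrand r) r := by
  obtain ⟨hr₀, hr₁⟩ := hr
  have hs : 0 < √r := sqrt_pos.2 hr₀
  have hc : 0 < √(1 - r) := sqrt_pos.2 (by linarith)
  have hsqrt := hasDerivAt_sqrt hr₀.ne'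
  have hden := (hasDerivAt_sqrt_one_sub hr₁).const_add 1
  have h := ((((hsqrt.const_mul 2).div hden (by positivity)).add
    ((hden.log (by positivity)).const_mul 2)).add
    ((hasDerivAt_arcsin_sqrt hr₀ hr₁).const_mul 2)).sub (hsqrt.const_mul 2)
  refine h.congr_deriv ?_
  have hsc : √r ^ 2 + √(1 - r) ^ 2 = 1 := by
    rw [sq_sqrt hr₀.le, sq_sqrt (by linarith)]; ring
  unfold integrand
  field_simp
  linear_combination -√(1 - r) * hsc

theorem setIntegral_integrand : ∫ r in Ioo (0:ℝ) 1, integrand r = π - 2 * log 2 := by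
  have hcont := continuous_antideriv.continuousOn (s := Icc 0 1)
  have hderiv : ∀ r ∈ Ioo (0:ℝ) 1, HasDerivAt antideriv (integrand r) r :=
    fun _ ↦ hasDerivAt_antideriv
  have hint : IntervalIntegrable integrand volume 0 1 :=
    (intervalIntegrable_iff_integrableOn_Ioc_of_le zero_le_one).2 <|
      intervalIntegral.integrableOn_deriv_of_nonneg hcont hderiv fun _ ↦ integrand_nonneg
  rw [← integral_Ioc_eq_integral_Ioo, ← intervalIntegral.integral_of_le zero_le_one,
    intervalIntegral.integral_eq_sub_of_hasDerivAt_of_le zero_le_one hcont hderiv hint]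
  norm_num [antideriv, one_add_one_eq_two, mul_div_cancel₀]

end OmegaZero

theorem Omega_zero : Omega 0 = 1 - Real.log 4 / Real.pi := by
  have h_integrand : ∀ r ∈ Ioo (0:ℝ) 1, 1 / (1 + √(1 - r)) * (1 - r) ^ (-(1:ℝ)/2) *
      (1 / (1 - 2 * 0) * (r ^ (-(1:ℝ)/2) - r ^ (-0:ℝ)) + r ^ ((1:ℝ)/2 - 0)) =
      OmegaZero.integrand r := fun r ⟨hr₀, hr₁⟩ ↦ by
    rw [rpow_neg_one_half_eq_inv_sqrt hr₀.le, rpow_neg_one_half_eq_inv_sqrt (sub_pos.2 hr₁).le,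
      sub_zero, ← sqrt_eq_rpow, neg_zero, rpow_zero]
    norm_num [OmegaZero.integrand]
  rw [Omega, setIntegral_congr_fun measurableSet_Ioo h_integrand, OmegaZero.setIntegral_integrand,
    show (4:ℝ) = 2 ^ 2 by norm_num, log_pow]
  field_simp
  ring
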